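/- In the Leibniz algebra L(γ) with γᵢ = -1 for all i (products [fᵢ,xᵢ] = fᵢ, [xᵢ,fᵢ] = -fᵢ), every derivation is inner, i.e., equal to a right multiplication operator R_a for some a ∈ L(γ). -/

import Mathlib

/-!
In `L(γ)` every bracket lies in `span {fᵢ}`, and `[u, xⱼ] = u_{fⱼ} fⱼ`, `[fᵢ, v] = v_{xᵢ} fᵢ`,
`[xᵢ, v] = -v_{fᵢ} fᵢ`. Applying a derivation `d` to the relations `[fₘ, xᵢ] = δₘᵢ fₘ` and
`[xᵢ, xⱼ] = 0` shows that `d fᵢ` and `d xᵢ` are both multiples of `fᵢ`, say `d fᵢ = αᵢ fᵢ` and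
`d xᵢ = βᵢ fᵢ`. These are exactly the values of `R_a` on the basis for `a = ∑ (-βᵢ fᵢ + αᵢ xᵢ)`.
-/

noncomputable section

open Finset

/-- Underlying space of `L(γ)` with `γᵢ = -1`, basis `f₁,…,f_k, x₁,…,x_k`. -/
abbrev Lneg (k : ℕ) := (Fin k ⊕ Fin k) → ℂ

/-- basis vector `fᵢ` -/
def Fb (k : ℕ) (i : Fin k) : Lneg k := fun s =>
  match s with
  | .inl a => if a = i then 1 else 0
  | .inr _ => 0

/-- Structure constants: `[fᵢ,xᵢ] = fᵢ`, `[xᵢ,fᵢ] = -fᵢ`. -/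
def cneg (k : ℕ) : (Fin k ⊕ Fin k) → (Fin k ⊕ Fin k) → Lneg k
  | .inl a, .inr b => if a = b then Fb k a else 0
  | .inr a, .inl b => if a = b then -Fb k b else 0
  | _, _ => 0

/-- Bracket of `L(γ)` with `γᵢ = -1`. -/
def brkneg (k : ℕ) (x y : Lneg k) : Lneg k :=
  ∑ i : Fin k ⊕ Fin k, ∑ j : Fin k ⊕ Fin k, (x i * y j) • cneg k i j

def Xb (k : ℕ) (i : Fin k) : Lneg k := fun s =>
  match s with
  | .inl _ => 0
  | .inr a => if a = i then 1 else 0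

namespace Lneg

variable {k : ℕ}

theorem Fb_eq_single (i : Fin k) : Fb k i = Pi.single (.inl i) 1 := by
  funext s
  cases s <;> simp [Fb, Pi.single_apply]

theorem Xb_eq_single (i : Fin k) : Xb k i = Pi.single (.inr i) 1 := by
  funext s
  cases s <;> simp [Xb, Pi.single_apply]

theorem brkneg_apply_inl (u v : Lneg k) (m : Fin k) :
    brkneg k u v (.inl m) = u (.inl m) * v (.inr m) - u (.inr m) * v (.inl m) := by
  simp [brkneg, Finset.sum_apply, Fintype.sum_sum_type, cneg, Fb,
    apply_ite (fun f : Lneg k => f (.inl m))]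
  ring

theorem brkneg_apply_inr (u v : Lneg k) (m : Fin k) : brkneg k u v (.inr m) = 0 := by
  simp [brkneg, Finset.sum_apply, Fintype.sum_sum_type, cneg, Fb,
    apply_ite (fun f : Lneg k => f (.inr m))]

def rightMul (a : Lneg k) : Lneg k →ₗ[ℂ] Lneg k where
  toFun y := brkneg k y a
  map_add' u v := by
    funext s
    cases s <;> simp only [brkneg_apply_inl, brkneg_apply_inr, Pi.add_apply] <;> ring
  map_smul' c u := by
    funext s
    cases s <;> simp only [brkneg_apply_inl, brkneg_apply_inr, Pi.smul_apply, smul_eq_mul,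
      RingHom.id_apply] <;> ring

theorem brkneg_Xb_right (u : Lneg k) (j : Fin k) :
    brkneg k u (Xb k j) = u (.inl j) • Fb k j := by
  funext s
  cases s with
  | inl m => by_cases h : m = j <;> simp [brkneg_apply_inl, Xb, Fb, h]
  | inr m => simp [brkneg_apply_inr, Fb]

theorem brkneg_Fb_left (i : Fin k) (v : Lneg k) :
    brkneg k (Fb k i) v = v (.inr i) • Fb k i := by
  funext s
  cases s with
  | inl m => by_cases h : m = i <;> simp [brkneg_apply_inl, Fb, h]
  | inr m => simp [brkneg_apply_inr, Fb]

theorem brkneg_Xb_left (i : Fin k) (v : Lneg k) :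
    brkneg k (Xb k i) v = -v (.inl i) • Fb k i := by
  funext s
  cases s with
  | inl m => by_cases h : m = i <;> simp [brkneg_apply_inl, Xb, Fb, h]
  | inr m => simp [brkneg_apply_inr, Fb]

section Derivation

variable {d : Lneg k →ₗ[ℂ] Lneg k}
  (hd : ∀ u v : Lneg k, d (brkneg k u v) = brkneg k (d u) v + brkneg k u (d v))
include hd

theorem derivation_Fb_Xb (m i : Fin k) :
    (if m = i then d (Fb k m) else 0) =
      d (Fb k m) (.inl i) • Fb k i + d (Xb k i) (.inr m) • Fb k m := by
  have h := hd (Fb k m) (Xb k i)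
  rw [brkneg_Fb_left, brkneg_Xb_right, brkneg_Fb_left] at h
  by_cases hmi : m = i
  · subst hmi
    simpa [Xb] using h
  · simpa [Xb, hmi] using h

theorem derivation_Xb_apply_inr (i m : Fin k) : d (Xb k i) (.inr m) = 0 := by
  have h := congrFun (derivation_Fb_Xb hd m i) (.inl m)
  by_cases hmi : m = i
  · subst hmi
    simpa [Fb] using h
  · simpa [Fb, hmi] using h.symm

theorem derivation_Fb_eq (i : Fin k) : d (Fb k i) = d (Fb k i) (.inl i) • Fb k i := by
  simpa [derivation_Xb_apply_inr hd] using derivation_Fb_Xb hd i i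

theorem derivation_Xb_eq (i : Fin k) : d (Xb k i) = d (Xb k i) (.inl i) • Fb k i := by
  funext s
  cases s with
  | inl j =>
    by_cases hji : j = i
    · subst hji
      simp [Fb]
    · have h := congrFun (hd (Xb k i) (Xb k j)) (.inl j)
      simp only [brkneg_Xb_right, brkneg_Xb_left, Xb, zero_smul, map_zero] at h
      simpa [Fb, hji, Ne.symm hji] using h.symm
  | inr m => simp [derivation_Xb_apply_inr hd, Fb]

end Derivation

end Lneg

open Lneg in
/-- In `L(γ)` with all `γᵢ = -1`, every derivation is inner: it equals the
right multiplication operator `R_a : y ↦ [y,a]` for some `a`. -/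
theorem derivations_of_Lgamma_neg_are_inner (k : ℕ)
    (d : Lneg k →ₗ[ℂ] Lneg k)
    (hd : ∀ u v : Lneg k, d (brkneg k u v) = brkneg k (d u) v + brkneg k u (d v)) :
    ∃ a : Lneg k, ∀ y : Lneg k, d y = brkneg k y a := by
  let a : Lneg k := Sum.elim (fun i => -d (Xb k i) (.inl i)) (fun i => d (Fb k i) (.inl i))
  have hda : d = rightMul a := by
    refine (Pi.basisFun ℂ (Fin k ⊕ Fin k)).ext fun s => ?_
    rw [Pi.basisFun_apply]
    cases s with
    | inl i =>
      rw [← Fb_eq_single, derivation_Fb_eq hd i]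
      exact (brkneg_Fb_left i a).symm
    | inr i =>
      rw [← Xb_eq_single, derivation_Xb_eq hd i]
      simp [rightMul, brkneg_Xb_left, a]
  exact ⟨a, fun y => congrArg (· y) hda⟩

end
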